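/- arXiv:2303.04895 — 3 statements merged into one kernel-verified Lean document; each statement's English description precedes it below -/
import Mathlib

section
/- Characterization of adjunctions between neighborhood dilations and erosions: for all structuring neighborhoods M and N on a type X, the adjunction property (∀ Y Z : Set X, δ[N] Y ⊆ Z ↔ Y ⊆ ε[M] Z) holds if and only if there exists a map b : X → Set X such that M x = 𝓟 (b x) (the principal filter of b x) for every x, and δ[N] Y = {x : X | ∃ y ∈ Y, x ∈ b y} for every Y : Set X. -/
variable {X : Type*}

/-- A structuring neighborhood: each `N x` is a filter all of whose members contain `x`. -/
def IsStructuringNbhd (N : X → Filter X) : Prop := ∀ x, ∀ A ∈ N x, x ∈ A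

/-- A topological neighborhood: a structuring neighborhood such that every member
`A` of `N x` contains a member `B` of `N x` each point of which has `A` as a member. -/
def IsTopologicalNbhd (N : X → Filter X) : Prop :=
  IsStructuringNbhd N ∧ ∀ x, ∀ A ∈ N x, ∃ B ∈ N x, ∀ y ∈ B, A ∈ N y

/-- Erosion by a structuring neighborhood. -/
def erosionN (N : X → Filter X) (Y : Set X) : Set X := {x | Y ∈ N x}

/-- Dilation by a structuring neighborhood. -/
def dilationN (N : X → Filter X) (Y : Set X) : Set X :=
  {x | ∀ A ∈ N x, (A ∩ Y).Nonempty}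

/-- Characterization of adjunctions between neighborhood dilations and erosions:
the adjunction property holds iff `M` is given by principal filters of some
`b : X → Set X` and `δ[N]` is the dilation by `b`. -/
theorem adjunction_iff_principal (M N : X → Filter X)
    (hM : IsStructuringNbhd M) (hN : IsStructuringNbhd N) :
    (∀ Y Z : Set X, dilationN N Y ⊆ Z ↔ Y ⊆ erosionN M Z) ↔
    (∃ b : X → Set X, (∀ x, M x = Filter.principal (b x)) ∧
      (∀ Y : Set X, dilationN N Y = {x | ∃ y ∈ Y, x ∈ b y})) := by
  constructor
  · intro h
    refine ⟨fun y => dilationN N {y}, ?_, ?_⟩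
    · intro y
      ext Z
      simp only [Filter.mem_principal]
      constructor
      · intro hZ
        have := (h {y} Z).mpr (by
          intro t ht
          rcases ht with rfl
          exact hZ)
        exact this
      · intro hZ
        have h1 : dilationN N {y} ∈ M y :=
          (h {y} (dilationN N {y})).mp (fun a ha => ha) rfl
        exact Filter.mem_of_superset h1 hZ
    · intro Y
      apply Set.Subset.antisymm
      · -- use adjunction with Z = the union
        have := (h Y {x | ∃ y ∈ Y, x ∈ dilationN N {y}}).mpr ?_
        · exact this
        · intro y hy
          -- need {x | ∃ y ∈ Y, ...} ∈ M y; since dilationN N {y} ⊆ it and that set ∈ M y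
          have h1 : dilationN N {y} ∈ M y :=
            (h {y} (dilationN N {y})).mp (fun a ha => ha) rfl
          exact Filter.mem_of_superset h1 (fun x hx => ⟨y, hy, hx⟩)
      · rintro x ⟨y, hy, hx⟩
        intro A hA
        rcases hx A hA with ⟨z, hzA, hz⟩
        rcases hz with rfl
        exact ⟨z, hzA, hy⟩
  · rintro ⟨b, hMb, hdil⟩ Y Z
    rw [hdil Y]
    constructor
    · rintro hsub y hy
      rw [erosionN, Set.mem_setOf_eq, hMb, Filter.mem_principal]
      intro x hx
      exact hsub ⟨y, hy, hx⟩
    · rintro hsub x ⟨y, hy, hx⟩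
      have := hsub hy
      rw [erosionN, Set.mem_setOf_eq, hMb, Filter.mem_principal] at this
      exact this hx
end

section
/- If N is a topological neighborhood on a type X, then the dilation δ[N] satisfies: (1) Y ⊆ δ[N] Y for all Y : Set X; (2) δ[N] ∅ = ∅; (3) δ[N] (δ[N] Y) = δ[N] Y for all Y : Set X (idempotence). -/
variable {X : Type*}

/-- For a topological neighborhood `N`, the dilation `δ[N]` is extensive,
preserves `∅`, and is idempotent. -/
theorem dilationN_closure_properties (N : X → Filter X) (hN : IsTopologicalNbhd N) :
    (∀ Y : Set X, Y ⊆ dilationN N Y) ∧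
    dilationN N (∅ : Set X) = ∅ ∧
    (∀ Y : Set X, dilationN N (dilationN N Y) = dilationN N Y) := by
  obtain ⟨hS, hT⟩ := hN
  have ext : ∀ Y : Set X, Y ⊆ dilationN N Y := by
    intro Y y hy A hA
    exact ⟨y, hS y A hA, hy⟩
  refine ⟨ext, ?_, ?_⟩
  · ext x
    simp only [dilationN, Set.mem_setOf_eq, Set.inter_empty, Set.not_nonempty_empty,
      Set.mem_empty_iff_false, iff_false, not_forall]
    exact ⟨Set.univ, Filter.univ_mem, fun h => h.elim⟩
  · intro Y
    apply Set.Subset.antisymm _ (ext _)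
    intro x hx A hA
    obtain ⟨B, hB, hBA⟩ := hT x A hA
    obtain ⟨y, hyB, hyδ⟩ := hx B hB
    exact hyδ A (hBA y hyB)
end

section
/- For every topological neighborhood N on a type X, the adjunction property (∀ Y Z : Set X, δ[N] Y ⊆ Z ↔ Y ⊆ ε[N] Z) holds if and only if open sets coincide with closed sets, i.e. for every W : Set X, ε[N] W = W if and only if δ[N] W = W. -/
variable {X : Type*}

lemma ero_subset {N : X → Filter X} (hN : IsStructuringNbhd N) (Y : Set X) :
    erosionN N Y ⊆ Y := fun x hx => hN x Y hx

lemma ero_mono {N : X → Filter X} {Y Z : Set X} (h : Y ⊆ Z) :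
    erosionN N Y ⊆ erosionN N Z := fun _ hx => Filter.mem_of_superset hx h

lemma dil_mono {N : X → Filter X} {Y Z : Set X} (h : Y ⊆ Z) :
    dilationN N Y ⊆ dilationN N Z := by
  intro x hx A hA
  obtain ⟨a, ha, haY⟩ := hx A hA
  exact ⟨a, ha, h haY⟩

lemma subset_dil {N : X → Filter X} (hN : IsStructuringNbhd N) (Y : Set X) :
    Y ⊆ dilationN N Y := fun x hx A hA => ⟨x, hN x A hA, hx⟩

lemma ero_idem {N : X → Filter X} (hN : IsTopologicalNbhd N) (Y : Set X) :
    erosionN N (erosionN N Y) = erosionN N Y := by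
  apply Set.Subset.antisymm (ero_subset hN.1 _)
  intro x hx
  obtain ⟨B, hB, hBY⟩ := hN.2 x Y hx
  exact Filter.mem_of_superset hB hBY

lemma dil_eq_compl {N : X → Filter X} (Y : Set X) :
    dilationN N Y = (erosionN N Yᶜ)ᶜ := by
  ext x
  simp only [dilationN, erosionN, Set.mem_setOf_eq, Set.mem_compl_iff]
  constructor
  · intro h hc
    obtain ⟨a, ha, haY⟩ := h Yᶜ hc
    exact ha haY
  · intro h A hA
    rw [Set.nonempty_iff_ne_empty]
    intro hemp
    exact h (Filter.mem_of_superset hA (fun a ha hay =>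
      Set.eq_empty_iff_forall_notMem.mp hemp a ⟨ha, hay⟩))

lemma dil_closed {N : X → Filter X} (hN : IsTopologicalNbhd N) (Y : Set X) :
    dilationN N (dilationN N Y) = dilationN N Y := by
  rw [dil_eq_compl (N := N) Y, dil_eq_compl, compl_compl, ero_idem hN]

/-- For a topological neighborhood `N`, the adjunction property holds iff
open sets coincide with closed sets. -/
theorem adjunction_iff_open_eq_closed (N : X → Filter X) (hN : IsTopologicalNbhd N) :
    (∀ Y Z : Set X, dilationN N Y ⊆ Z ↔ Y ⊆ erosionN N Z) ↔
    (∀ W : Set X, erosionN N W = W ↔ dilationN N W = W) := by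
  constructor
  · intro adj W
    constructor
    · intro hopen
      apply Set.Subset.antisymm
      · exact (adj W W).mpr hopen.symm.subset
      · exact subset_dil hN.1 W
    · intro hclosed
      apply Set.Subset.antisymm (ero_subset hN.1 W)
      exact (adj W W).mp hclosed.subset
  · intro oc Y Z
    constructor
    · intro h
      have hYcl : dilationN N (dilationN N Y) = dilationN N Y := dil_closed hN Y
      have hYop : erosionN N (dilationN N Y) = dilationN N Y := (oc _).mpr hYcl
      calc Y ⊆ dilationN N Y := subset_dil hN.1 Y
        _ = erosionN N (dilationN N Y) := hYop.symm
        _ ⊆ erosionN N Z := ero_mono h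
    · intro h
      have hZop : erosionN N (erosionN N Z) = erosionN N Z := ero_idem hN Z
      have hZcl : dilationN N (erosionN N Z) = erosionN N Z := (oc _).mp hZop
      calc dilationN N Y ⊆ dilationN N (erosionN N Z) := dil_mono h
        _ = erosionN N Z := hZcl
        _ ⊆ Z := ero_subset hN.1 Z
end
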